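/- Conjugation follows from the L-moves: for every n ≥ 2, every braid word w ∈ W_n, and every 1 ≤ i ≤ n−1, the words w and σ_i^{-1} w σ_i are equivalent under the equivalence relation ≈_L on ⋃_{n≥1} W_n generated by word equivalence in the braid groups together with the algebraic L-moves (L_o) and (L_u). Consequently also w ≈_L σ_i w σ_i^{-1}. -/

import Mathlib

/-!
Braid words. A letter `(j, b) : ℕ × Bool` represents the braid generator
`σ_j` if `b = true` and its inverse `σ_j⁻¹` if `b = false` (indices `j ≥ 1`).
-/

/-- A letter `(j, b)` stands for `σ_j^{+1}` if `b = true`, `σ_j^{-1}` if `b = false`. -/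
abbrev BraidLetter : Type := ℕ × Bool

/-- A braid word is a list of letters `σ_j^{±1}`. -/
abbrev BraidWord : Type := List BraidLetter

/-- `memW n w` says `w ∈ Wₙ`: `w` is a word in the letters `σ_1^{±1}, …, σ_{n-1}^{±1}`.
(The natural inclusion `Wₙ ⊆ W_{n+1}` is literal inclusion of sets of words.) -/
def memW (n : ℕ) (w : BraidWord) : Prop := ∀ l ∈ w, 1 ≤ l.1 ∧ l.1 ≤ n - 1

/-- One step of word equivalence in the braid group `Bₙ`: free reduction, the braid
relations `σ_j σ_{j+1} σ_j = σ_{j+1} σ_j σ_{j+1}`, and `σ_j σ_k = σ_k σ_j` for `|j-k| ≥ 2`. -/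
inductive BraidStep (n : ℕ) : BraidWord → BraidWord → Prop
  /-- free reduction: cancel `σ_j^{ε} σ_j^{-ε}` -/
  | cancel (u v : BraidWord) (j : ℕ) (b : Bool) (h1 : 1 ≤ j) (h2 : j ≤ n - 1) :
      BraidStep n (u ++ [(j, b), (j, !b)] ++ v) (u ++ v)
  /-- braid relation `σ_j σ_{j+1} σ_j = σ_{j+1} σ_j σ_{j+1}` for `1 ≤ j ≤ n - 2` -/
  | braid (u v : BraidWord) (j : ℕ) (h1 : 1 ≤ j) (h2 : j + 1 ≤ n - 1) :
      BraidStep n (u ++ [(j, true), (j + 1, true), (j, true)] ++ v)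
                  (u ++ [(j + 1, true), (j, true), (j + 1, true)] ++ v)
  /-- commutation `σ_j σ_k = σ_k σ_j` for `|j - k| ≥ 2` -/
  | comm (u v : BraidWord) (j k : ℕ) (h1 : 1 ≤ j) (h2 : j + 2 ≤ k) (h3 : k ≤ n - 1) :
      BraidStep n (u ++ [(j, true), (k, true)] ++ v) (u ++ [(k, true), (j, true)] ++ v)

/-- Word equivalence in the braid group `Bₙ`: the equivalence relation generated by
free reduction and the braid relations. -/
def braidWordEquiv (n : ℕ) : BraidWord → BraidWord → Prop :=
  Relation.EqvGen (BraidStep n)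

/-- For `w ∈ Wₙ`, the word `w'` obtained by replacing each letter `σ_j^{±1}` with
`i ≤ j` by `σ_{j+1}^{±1}`. -/
def shiftFrom (i : ℕ) (w : BraidWord) : BraidWord :=
  w.map fun l => if i ≤ l.1 then (l.1 + 1, l.2) else l

/-- The word `σ_a σ_{a+1} ⋯ σ_b` (all letters with sign `s`), indices increasing.
Since `σ_0` is not a generator, indices start at `max a 1`; the word is empty if the
index range is empty. -/
def ascWord (a b : ℕ) (s : Bool) : BraidWord :=
  (List.range' (max a 1) (b + 1 - max a 1)).map fun j => (j, s)

/-- The word obtained from an over `L`-move (`L_o`) with sign `s` performed on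
`w₁ w₂ ∈ Wₙ` at position `i`:
`σ_i^{-1}⋯σ_n^{-1} · w₁' · σ_{i-1}^{-1}⋯σ_{n-1}^{-1} σ_n^{±1} σ_{n-1}⋯σ_i · w₂' · σ_n⋯σ_i`. -/
def LoWord (n i : ℕ) (s : Bool) (w₁ w₂ : BraidWord) : BraidWord :=
  ascWord i n false ++ shiftFrom i w₁ ++ ascWord (i - 1) (n - 1) false ++ [(n, s)] ++
    (ascWord i (n - 1) true).reverse ++ shiftFrom i w₂ ++ (ascWord i n true).reverse

/-- The word obtained from an under `L`-move (`L_u`) with sign `s` performed on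
`w₁ w₂ ∈ Wₙ` at position `i`:
`σ_i⋯σ_n · w₁' · σ_{i-1}⋯σ_{n-1} σ_n^{±1} σ_{n-1}^{-1}⋯σ_i^{-1} · w₂' · σ_n^{-1}⋯σ_i^{-1}`. -/
def LuWord (n i : ℕ) (s : Bool) (w₁ w₂ : BraidWord) : BraidWord :=
  ascWord i n true ++ shiftFrom i w₁ ++ ascWord (i - 1) (n - 1) true ++ [(n, s)] ++
    (ascWord i (n - 1) false).reverse ++ shiftFrom i w₂ ++ (ascWord i n false).reverse

/-- Generating moves of Markov equivalence on `⋃_{n≥1} Wₙ`: word equivalence in each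
braid group, conjugation, and bottom stabilization. -/
inductive MarkovRel : BraidWord → BraidWord → Prop
  /-- (a) word equivalence in `Bₙ` -/
  | word (n : ℕ) (u v : BraidWord) (hn : 1 ≤ n) (hu : memW n u)
      (h : braidWordEquiv n u v) : MarkovRel u v
  /-- (b) conjugation `w ≈ σ_i^{-1} w σ_i` -/
  | conj (n i : ℕ) (w : BraidWord) (hn : 1 ≤ n) (hw : memW n w)
      (h1 : 1 ≤ i) (h2 : i ≤ n - 1) :
      MarkovRel w ([(i, false)] ++ w ++ [(i, true)])
  /-- (c) bottom stabilization `w ≈ w · σ_n^{±1}` -/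
  | stab (n : ℕ) (w : BraidWord) (s : Bool) (hn : 1 ≤ n) (hw : memW n w) :
      MarkovRel w (w ++ [(n, s)])

/-- Markov equivalence `≈_M` on `⋃_{n≥1} Wₙ`. -/
def markovEquiv : BraidWord → BraidWord → Prop := Relation.EqvGen MarkovRel

/-- Generating moves of the `L`-move equivalence on `⋃_{n≥1} Wₙ`: word equivalence in
each braid group, and the algebraic `L`-moves `L_o` and `L_u`. -/
inductive LRel : BraidWord → BraidWord → Prop
  /-- (a) word equivalence in `Bₙ` -/
  | word (n : ℕ) (u v : BraidWord) (hn : 1 ≤ n) (hu : memW n u)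
      (h : braidWordEquiv n u v) : LRel u v
  /-- over `L`-move -/
  | Lo (n i : ℕ) (s : Bool) (w₁ w₂ : BraidWord) (hn : 1 ≤ n)
      (h1 : 1 ≤ i) (h2 : i ≤ n) (hw₁ : memW n w₁) (hw₂ : memW n w₂) :
      LRel (w₁ ++ w₂) (LoWord n i s w₁ w₂)
  /-- under `L`-move -/
  | Lu (n i : ℕ) (s : Bool) (w₁ w₂ : BraidWord) (hn : 1 ≤ n)
      (h1 : 1 ≤ i) (h2 : i ≤ n) (hw₁ : memW n w₁) (hw₂ : memW n w₂) :
      LRel (w₁ ++ w₂) (LuWord n i s w₁ w₂)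

/-- The `L`-move equivalence `≈_L` on `⋃_{n≥1} Wₙ`. -/
def lEquiv : BraidWord → BraidWord → Prop := Relation.EqvGen LRel

/-!
Two `L_u`-moves with empty `w₁`, the first at position `i` in `Bₙ` and the second at position
`i + 2` in `B_{n+1}`, turn every `v ∈ Wₙ` into `P · v'' · Q`, where `P` and `Q` do not depend
on `v` and `v''` is `v` with its indices shifted twice. The conjugating letters `σ_i^{±1}`
become `σ_{i+1}^{±1}` in `v''`, while the rest of `v''` contains neither `σ_i` nor `σ_{i+2}`.
So `σ_{i+1}^{±1}` commutes with it and the conjugation cancels by word equivalence in `B_{n+2}`.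
-/

theorem memW_append {n : ℕ} {u v : BraidWord} : memW n (u ++ v) ↔ memW n u ∧ memW n v :=
  List.forall_mem_append

theorem memW_reverse {n : ℕ} {u : BraidWord} : memW n u.reverse ↔ memW n u := by
  simp only [memW, List.mem_reverse]

theorem memW_ascWord {n a b : ℕ} (s : Bool) (hb : b ≤ n - 1) : memW n (ascWord a b s) := by
  simp only [memW, ascWord, List.mem_map, List.mem_range'_1]
  rintro _ ⟨j, hj, rfl⟩
  omega

theorem memW_shiftFrom {n : ℕ} (i : ℕ) {w : BraidWord} (hw : memW n w) :
    memW (n + 1) (shiftFrom i w) := by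
  simp only [memW, shiftFrom, List.mem_map]
  rintro _ ⟨l, hl, rfl⟩
  have := hw l hl
  split_ifs <;> dsimp <;> omega

theorem shiftFrom_append (i : ℕ) (u v : BraidWord) :
    shiftFrom i (u ++ v) = shiftFrom i u ++ shiftFrom i v :=
  List.map_append

theorem shiftFrom_nil (i : ℕ) : shiftFrom i [] = [] := rfl

theorem fst_ne_of_mem_shiftFrom {i : ℕ} {w : BraidWord} {l : BraidLetter}
    (hl : l ∈ shiftFrom i w) : l.1 ≠ i := by
  simp only [shiftFrom, List.mem_map] at hl
  obtain ⟨m, -, rfl⟩ := hl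
  split_ifs <;> dsimp <;> omega

theorem fst_ne_of_mem_shiftFrom_shiftFrom {i : ℕ} {w : BraidWord} {l : BraidLetter}
    (hl : l ∈ shiftFrom (i + 2) (shiftFrom i w)) : l.1 ≠ i ∧ l.1 ≠ i + 2 := by
  refine ⟨?_, fst_ne_of_mem_shiftFrom hl⟩
  obtain ⟨m, hm, rfl⟩ := List.mem_map.1 hl
  have hmi : m.1 ≠ i := fst_ne_of_mem_shiftFrom hm
  split_ifs <;> dsimp <;> omega

namespace braidWordEquiv

variable {n : ℕ}

theorem refl (u : BraidWord) : braidWordEquiv n u u := Relation.EqvGen.refl u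

theorem symm {u v : BraidWord} (h : braidWordEquiv n u v) : braidWordEquiv n v u :=
  Relation.EqvGen.symm _ _ h

theorem trans {u v w : BraidWord} (h : braidWordEquiv n u v) (h' : braidWordEquiv n v w) :
    braidWordEquiv n u w :=
  Relation.EqvGen.trans _ _ _ h h'

theorem of_step {u v : BraidWord} (h : BraidStep n u v) : braidWordEquiv n u v :=
  Relation.EqvGen.rel _ _ h

theorem _root_.BraidStep.append_append {u v : BraidWord} (h : BraidStep n u v)
    (C D : BraidWord) : BraidStep n (C ++ u ++ D) (C ++ v ++ D) := by
  cases h with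
  | cancel u v j b h1 h2 => simpa using BraidStep.cancel (n := n) (C ++ u) (v ++ D) j b h1 h2
  | braid u v j h1 h2 => simpa using BraidStep.braid (n := n) (C ++ u) (v ++ D) j h1 h2
  | comm u v j k h1 h2 h3 => simpa using BraidStep.comm (n := n) (C ++ u) (v ++ D) j k h1 h2 h3

theorem append_append {u v : BraidWord} (h : braidWordEquiv n u v) (C D : BraidWord) :
    braidWordEquiv n (C ++ u ++ D) (C ++ v ++ D) := by
  induction h with
  | rel u v h => exact of_step (h.append_append C D)
  | refl u => exact refl _
  | symm u v _ ih => exact ih.symm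
  | trans u v w _ _ ih ih' => exact ih.trans ih'

theorem cancel {j : ℕ} (b : Bool) (hj1 : 1 ≤ j) (hj2 : j ≤ n - 1) :
    braidWordEquiv n [(j, b), (j, !b)] [] :=
  of_step (by simpa using BraidStep.cancel (n := n) [] [] j b hj1 hj2)

/-- A letter commuting with `c` has an inverse commuting with `c`:
`σ⁻¹ c = σ⁻¹ c σ σ⁻¹ = σ⁻¹ σ c σ⁻¹ = c σ⁻¹`. -/
theorem swap_not_left {j : ℕ} {b : Bool} {c : BraidLetter} (hj1 : 1 ≤ j) (hj2 : j ≤ n - 1)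
    (h : braidWordEquiv n [(j, b), c] [c, (j, b)]) :
    braidWordEquiv n [(j, !b), c] [c, (j, !b)] := by
  have insert : braidWordEquiv n [(j, !b), c] [(j, !b), c, (j, b), (j, !b)] := by
    simpa using ((cancel b hj1 hj2).append_append [(j, !b), c] []).symm
  have swap : braidWordEquiv n [(j, !b), c, (j, b), (j, !b)] [(j, !b), (j, b), c, (j, !b)] := by
    simpa using (h.symm.append_append [(j, !b)] [(j, !b)])
  have remove : braidWordEquiv n [(j, !b), (j, b), c, (j, !b)] [c, (j, !b)] := by
    simpa using (cancel (!b) hj1 hj2).append_append [] [c, (j, !b)]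
  exact insert.trans (swap.trans remove)

theorem swap_of_add_two_le {j k : ℕ} (b c : Bool) (hj1 : 1 ≤ j) (hk : k ≤ n - 1)
    (hjk : j + 2 ≤ k) : braidWordEquiv n [(j, b), (k, c)] [(k, c), (j, b)] := by
  have htt : braidWordEquiv n [(j, true), (k, true)] [(k, true), (j, true)] :=
    of_step (by simpa using BraidStep.comm (n := n) [] [] j k hj1 hjk hk)
  have hbt : braidWordEquiv n [(j, b), (k, true)] [(k, true), (j, b)] := by
    cases b
    · exact swap_not_left hj1 (by omega) htt
    · exact htt
  cases c
  · exact (swap_not_left (by omega) hk hbt.symm).symm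
  · exact hbt

theorem swap_of_eq {j : ℕ} (b c : Bool) (hj1 : 1 ≤ j) (hj2 : j ≤ n - 1) :
    braidWordEquiv n [(j, b), (j, c)] [(j, c), (j, b)] := by
  obtain rfl | rfl : c = b ∨ c = !b := by cases b <;> cases c <;> simp
  · exact refl _
  · exact (cancel b hj1 hj2).trans (by simpa using (cancel (!b) hj1 hj2).symm)

theorem swap {j k : ℕ} (b c : Bool) (hj1 : 1 ≤ j) (hj2 : j ≤ n - 1) (hk1 : 1 ≤ k)
    (hk2 : k ≤ n - 1) (hjk : k ≠ j + 1) (hkj : j ≠ k + 1) :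
    braidWordEquiv n [(j, b), (k, c)] [(k, c), (j, b)] := by
  obtain rfl | hlt | hgt : j = k ∨ j + 2 ≤ k ∨ k + 2 ≤ j := by omega
  · exact swap_of_eq b c hj1 hj2
  · exact swap_of_add_two_le b c hj1 hk2 hlt
  · exact (swap_of_add_two_le c b hk1 hj2 hgt).symm

theorem move_past {j : ℕ} (b : Bool) (hj1 : 1 ≤ j) (hj2 : j ≤ n - 1) {X : BraidWord}
    (hX : memW n X) (hfar : ∀ l ∈ X, l.1 ≠ j + 1 ∧ j ≠ l.1 + 1) :
    braidWordEquiv n ([(j, b)] ++ X) (X ++ [(j, b)]) := by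
  induction X with
  | nil => exact refl _
  | cons l X ih =>
    have hl := hX l List.mem_cons_self
    have hfl := hfar l List.mem_cons_self
    have head : braidWordEquiv n ([(j, b)] ++ l :: X) ([l] ++ ([(j, b)] ++ X)) := by
      simpa using (swap b l.2 hj1 hj2 hl.1 hl.2 hfl.1 hfl.2).append_append [] X
    have tail : braidWordEquiv n ([l] ++ ([(j, b)] ++ X)) ([l] ++ (X ++ [(j, b)])) := by
      simpa using (ih (fun m hm => hX m (List.mem_cons_of_mem l hm))
        (fun m hm => hfar m (List.mem_cons_of_mem l hm))).append_append [l] []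
    simpa using head.trans tail

theorem conj_cancel {j : ℕ} (b : Bool) (hj1 : 1 ≤ j) (hj2 : j ≤ n - 1) {X : BraidWord}
    (hX : memW n X) (hfar : ∀ l ∈ X, l.1 ≠ j + 1 ∧ j ≠ l.1 + 1) :
    braidWordEquiv n ([(j, b)] ++ X ++ [(j, !b)]) X := by
  have move : braidWordEquiv n ([(j, b)] ++ X ++ [(j, !b)]) (X ++ [(j, b), (j, !b)]) := by
    simpa using (move_past b hj1 hj2 hX hfar).append_append [] [(j, !b)]
  have remove : braidWordEquiv n (X ++ [(j, b), (j, !b)]) X := by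
    simpa using (cancel b hj1 hj2).append_append X []
  exact move.trans remove

end braidWordEquiv

namespace lEquiv

theorem symm {u v : BraidWord} (h : lEquiv u v) : lEquiv v u := Relation.EqvGen.symm _ _ h

theorem trans {u v w : BraidWord} (h : lEquiv u v) (h' : lEquiv v w) : lEquiv u w :=
  Relation.EqvGen.trans _ _ _ h h'

theorem of_braidWordEquiv {n : ℕ} {u v : BraidWord} (hn : 1 ≤ n) (hu : memW n u)
    (h : braidWordEquiv n u v) : lEquiv u v :=
  Relation.EqvGen.rel _ _ (LRel.word n u v hn hu h)

end lEquiv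

/-- An `L_u`-move with empty `w₁`. -/
theorem exists_lEquiv_sandwich_shiftFrom {n i : ℕ} (h1 : 1 ≤ i) (h2 : i ≤ n) :
    ∃ P Q : BraidWord, memW (n + 1) P ∧ memW (n + 1) Q ∧
      ∀ v, memW n v → lEquiv v (P ++ shiftFrom i v ++ Q) := by
  refine ⟨ascWord i n true ++ ascWord (i - 1) (n - 1) true ++ [(n, true)] ++
      (ascWord i (n - 1) false).reverse, (ascWord i n false).reverse, ?_, ?_, fun v hv => ?_⟩
  · simp only [memW_append, memW_reverse]
    refine ⟨⟨⟨memW_ascWord _ (by omega), memW_ascWord _ (by omega)⟩, ?_⟩,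
      memW_ascWord _ (by omega)⟩
    simp only [memW, List.mem_singleton, forall_eq]
    omega
  · exact memW_reverse.2 (memW_ascWord _ (by omega))
  · have hnil : memW n [] := fun _ h => absurd h List.not_mem_nil
    have : lEquiv ([] ++ v) (LuWord n i true [] v) :=
      Relation.EqvGen.rel _ _ (LRel.Lu n i true [] v (by omega) h1 h2 hnil hv)
    simpa [LuWord, shiftFrom_nil] using this

theorem exists_lEquiv_sandwich_shiftFrom_shiftFrom {n i : ℕ} (h1 : 1 ≤ i) (h2 : i + 1 ≤ n) :
    ∃ P Q : BraidWord, memW (n + 2) P ∧ memW (n + 2) Q ∧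
      ∀ v, memW n v → lEquiv v (P ++ shiftFrom (i + 2) (shiftFrom i v) ++ Q) := by
  obtain ⟨P₁, Q₁, hP₁, hQ₁, hL₁⟩ := exists_lEquiv_sandwich_shiftFrom h1 (by omega : i ≤ n)
  obtain ⟨P₂, Q₂, hP₂, hQ₂, hL₂⟩ :=
    exists_lEquiv_sandwich_shiftFrom (by omega : 1 ≤ i + 2) (by omega : i + 2 ≤ n + 1)
  refine ⟨P₂ ++ shiftFrom (i + 2) P₁, shiftFrom (i + 2) Q₁ ++ Q₂,
    memW_append.2 ⟨hP₂, memW_shiftFrom _ hP₁⟩, memW_append.2 ⟨memW_shiftFrom _ hQ₁, hQ₂⟩,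
    fun v hv => ?_⟩
  have hv' : memW (n + 1) (P₁ ++ shiftFrom i v ++ Q₁) :=
    memW_append.2 ⟨memW_append.2 ⟨hP₁, memW_shiftFrom _ hv⟩, hQ₁⟩
  simpa [shiftFrom_append] using (hL₁ v hv).trans (hL₂ _ hv')

theorem lEquiv_conj {n i : ℕ} {w : BraidWord} (h1 : 1 ≤ i) (h2 : i + 1 ≤ n) (hw : memW n w)
    (b : Bool) : lEquiv w ([(i, b)] ++ w ++ [(i, !b)]) := by
  obtain ⟨P, Q, hP, hQ, hL⟩ := exists_lEquiv_sandwich_shiftFrom_shiftFrom h1 h2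
  set X := shiftFrom (i + 2) (shiftFrom i w)
  have hconj : memW n ([(i, b)] ++ w ++ [(i, !b)]) := by
    refine memW_append.2 ⟨memW_append.2 ⟨?_, hw⟩, ?_⟩ <;>
      simp only [memW, List.mem_singleton, forall_eq] <;> omega
  have hshift : shiftFrom (i + 2) (shiftFrom i ([(i, b)] ++ w ++ [(i, !b)])) =
      [(i + 1, b)] ++ X ++ [(i + 1, !b)] := by
    simp [X, shiftFrom]
  have hcancel : braidWordEquiv (n + 2) (P ++ ([(i + 1, b)] ++ X ++ [(i + 1, !b)]) ++ Q)
      (P ++ X ++ Q) :=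
    (braidWordEquiv.conj_cancel b (by omega) (by omega)
      (memW_shiftFrom _ (memW_shiftFrom _ hw))
      (fun l hl => by have := fst_ne_of_mem_shiftFrom_shiftFrom hl; omega)).append_append P Q
  have hmem : memW (n + 2) (P ++ ([(i + 1, b)] ++ X ++ [(i + 1, !b)]) ++ Q) := by
    rw [← hshift]
    exact memW_append.2 ⟨memW_append.2 ⟨hP, memW_shiftFrom _ (memW_shiftFrom _ hconj)⟩, hQ⟩
  have hX := (lEquiv.of_braidWordEquiv (by omega) hmem hcancel).symm
  rw [← hshift] at hX
  exact (hL w hw).trans (hX.trans (hL _ hconj).symm)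

theorem conjugation_follows_from_L_moves_general (n i : ℕ) (w : BraidWord)
    (hw : memW n w) (h1 : 1 ≤ i) (h2 : i ≤ n - 1) :
    lEquiv w ([(i, false)] ++ w ++ [(i, true)]) ∧
    lEquiv w ([(i, true)] ++ w ++ [(i, false)]) :=
  ⟨lEquiv_conj h1 (by omega) hw false, lEquiv_conj h1 (by omega) hw true⟩

/-- conjugation follows from the `L`-moves. For every `n ≥ 2`, every
braid word `w ∈ Wₙ` and every `1 ≤ i ≤ n-1`, we have `w ≈_L σ_i^{-1} w σ_i`, and
consequently also `w ≈_L σ_i w σ_i^{-1}`. -/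
theorem conjugation_follows_from_L_moves (n i : ℕ) (w : BraidWord)
    (hn : 2 ≤ n) (hw : memW n w) (h1 : 1 ≤ i) (h2 : i ≤ n - 1) :
    lEquiv w ([(i, false)] ++ w ++ [(i, true)]) ∧
    lEquiv w ([(i, true)] ++ w ++ [(i, false)]) :=
  conjugation_follows_from_L_moves_general n i w hw h1 h2
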